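/- For every k ≥ 0, every G ∈ Δ_k, and every vertex v of G, the rooted graph (G, v) has at least 2^{k+1} orbits under its automorphism group, where automorphisms are required to fix v. -/

import Mathlib

/-- The delta composition of three graphs: disjoint union plus a triangle
`v₁v₂v₃` with one vertex in each part. -/
def deltaComp {V₁ V₂ V₃ : Type} (G₁ : SimpleGraph V₁) (G₂ : SimpleGraph V₂)
    (G₃ : SimpleGraph V₃) (v₁ : V₁) (v₂ : V₂) (v₃ : V₃) :
    SimpleGraph (V₁ ⊕ V₂ ⊕ V₃) where
  Adj x y := match x, y with
    | .inl a, .inl b => G₁.Adj a b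
    | .inr (.inl a), .inr (.inl b) => G₂.Adj a b
    | .inr (.inr a), .inr (.inr b) => G₃.Adj a b
    | .inl a, .inr (.inl b) => a = v₁ ∧ b = v₂
    | .inr (.inl a), .inl b => a = v₂ ∧ b = v₁
    | .inl a, .inr (.inr b) => a = v₁ ∧ b = v₃
    | .inr (.inr a), .inl b => a = v₃ ∧ b = v₁
    | .inr (.inl a), .inr (.inr b) => a = v₂ ∧ b = v₃
    | .inr (.inr a), .inr (.inl b) => a = v₃ ∧ b = v₂
  symm := by
    constructor
    rintro (a|a|a) (b|b|b) h
    · exact G₁.adj_symm h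
    · exact ⟨h.2, h.1⟩
    · exact ⟨h.2, h.1⟩
    · exact ⟨h.2, h.1⟩
    · exact G₂.adj_symm h
    · exact ⟨h.2, h.1⟩
    · exact ⟨h.2, h.1⟩
    · exact ⟨h.2, h.1⟩
    · exact G₃.adj_symm h
  loopless := by constructor; rintro (a|a|a) h <;> exact (SimpleGraph.irrefl _) h

/-- `InDelta k G` means `G` belongs to the class `Δ_k` (up to isomorphism):
`Δ_0 = {K₂}` and `Δ_k` is the set of delta compositions of three graphs in
`Δ_{k-1}`. -/
inductive InDelta : ℕ → {V : Type} → SimpleGraph V → Prop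
  | base {V : Type} (G : SimpleGraph V)
      (e : Nonempty (G ≃g (⊤ : SimpleGraph (Fin 2)))) : InDelta 0 G
  | comp {k : ℕ} {V₁ V₂ V₃ V : Type} {G₁ : SimpleGraph V₁} {G₂ : SimpleGraph V₂}
      {G₃ : SimpleGraph V₃} (G : SimpleGraph V) (v₁ : V₁) (v₂ : V₂) (v₃ : V₃)
      (h₁ : InDelta k G₁) (h₂ : InDelta k G₂) (h₃ : InDelta k G₃)
      (e : Nonempty (G ≃g deltaComp G₁ G₂ G₃ v₁ v₂ v₃)) : InDelta (k+1) G

/-- `x` and `y` are in the same orbit of the automorphism group of the rooted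
graph `(G, v)` (automorphisms fixing `v`). -/
def rootedOrbitRel {V : Type} (G : SimpleGraph V) (v : V) (x y : V) : Prop :=
  ∃ φ : G ≃g G, φ v = v ∧ φ x = y

/-!
Write `G ≅ Δ(G₁, G₂, G₃)` with main triangle `t₁t₂t₃` and, after a rotation, the root `v` in
`G₁`. The `Gᵢ ∈ Δ_{k-1}` are connected with `n = 2·3^(k-1)` vertices each, so deleting the edges of
the main triangle leaves components of size `n`, while deleting those of any other triangle (which
lies inside one part) leaves a component with more than `n` vertices. Hence every automorphism
fixes the main triangle setwise and permutes the three parts. An automorphism fixing `v` therefore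
restricts to an automorphism of `(G₁, v)`, and if it maps a vertex of `G₂` into `G₂` it restricts
to an automorphism of `(G₂, t₂)`. Choosing orbit representatives thus embeds the orbits of
`(G₁, v)` and those of `(G₂, t₂)` disjointly into the orbits of `(G, v)`, doubling the bound at
each level.
-/

open SimpleGraph

namespace SimpleGraph

variable {V W : Type*}

def Iso.deleteEdgesSym2 {G : SimpleGraph V} {H : SimpleGraph W} (e : G ≃g H) (S : Set V) :
    G.deleteEdges S.sym2 ≃g H.deleteEdges (e '' S).sym2 where
  toEquiv := e.toEquiv
  map_rel_iff' := by
    intro x y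
    simp only [deleteEdges_adj, Set.mk_mem_sym2_iff, RelIso.coe_fn_toEquiv,
      e.injective.mem_set_image, e.map_adj_iff]

def IsBalancedCut (G : SimpleGraph V) (S : Set V) (n : ℕ) : Prop :=
  ∀ x, {y | (G.deleteEdges S.sym2).Reachable x y}.ncard ≤ n

lemma IsBalancedCut.image {G : SimpleGraph V} {H : SimpleGraph W} (e : G ≃g H) {S : Set V}
    {n : ℕ} (h : G.IsBalancedCut S n) : H.IsBalancedCut (e '' S) n := by
  intro x
  obtain ⟨x, rfl⟩ := e.surjective x
  have hset : {y | (H.deleteEdges (e '' S).sym2).Reachable (e x) y} =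
      e '' {y | (G.deleteEdges S.sym2).Reachable x y} := by
    ext y
    obtain ⟨y, rfl⟩ := e.surjective y
    rw [e.injective.mem_set_image]
    exact Iso.reachable_iff (φ := e.deleteEdgesSym2 S)
  rw [hset, Set.ncard_image_of_injective _ e.injective]
  exact h _

lemma IsClique.image {G : SimpleGraph V} {H : SimpleGraph W} (e : G ≃g H) {S : Set V}
    (h : G.IsClique S) : H.IsClique (e '' S) := by
  rintro _ ⟨a, ha, rfl⟩ _ ⟨b, hb, rfl⟩ hne
  exact e.map_adj_iff.mpr (h ha hb fun hab => hne (congrArg e hab))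

lemma Iso.exists_restrict {A : SimpleGraph V} {B : SimpleGraph W} {f : V → W}
    (hf : f.Injective) (hadj : ∀ a b, B.Adj (f a) (f b) ↔ A.Adj a b) (φ : B ≃g B)
    (h : ∀ a, φ (f a) ∈ Set.range f) (h' : ∀ a, φ.symm (f a) ∈ Set.range f) :
    ∃ ψ : A ≃g A, ∀ a, φ (f a) = f (ψ a) := by
  choose g hg using h
  choose g' hg' using h'
  refine ⟨⟨⟨g, g', fun a => hf ?_, fun a => hf ?_⟩, fun {a b} => ?_⟩, fun a => (hg a).symm⟩
  · rw [hg', hg, φ.symm_apply_apply]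
  · rw [hg, hg', φ.apply_symm_apply]
  · simp only [Equiv.coe_fn_mk, ← hadj, hg, φ.map_adj_iff]

end SimpleGraph

section RootedOrbits

variable {V W : Type}

lemma rootedOrbitRel_equivalence (G : SimpleGraph V) (v : V) :
    Equivalence (rootedOrbitRel G v) where
  refl _ := ⟨Iso.refl, rfl, rfl⟩
  symm := by
    rintro x y ⟨φ, hv, rfl⟩
    exact ⟨φ.symm, φ.symm_apply_eq.mpr hv.symm, φ.symm_apply_apply x⟩
  trans := by
    rintro x y z ⟨φ, hv, rfl⟩ ⟨ψ, hv', rfl⟩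
    exact ⟨φ.trans ψ, by simp [hv, hv'], rfl⟩

lemma rootedOrbitRel_iff_mk_eq {G : SimpleGraph V} {v x y : V} :
    rootedOrbitRel G v x y ↔ Quot.mk (rootedOrbitRel G v) x = Quot.mk _ y := by
  rw [Quot.eq, (rootedOrbitRel_equivalence G v).eqvGen_iff]

instance [Finite V] (G : SimpleGraph V) (v : V) : Finite (Quot (rootedOrbitRel G v)) :=
  Finite.of_surjective _ Quot.mk_surjective

def SimpleGraph.Iso.rootedOrbitsEquiv {G : SimpleGraph V} {H : SimpleGraph W} (e : G ≃g H) (v : V) :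
    Quot (rootedOrbitRel G v) ≃ Quot (rootedOrbitRel H (e v)) :=
  Quot.congr e.toEquiv fun x y => by
    constructor
    · rintro ⟨φ, hv, rfl⟩
      exact ⟨(e.symm.trans φ).trans e, by simp [hv], by simp⟩
    · rintro ⟨φ, hv, hx⟩
      exact ⟨(e.trans φ).trans e.symm, by simp [hv], by simpa [e.symm_apply_eq] using hx⟩

lemma two_le_card_rootedOrbits [Finite V] [Nontrivial V] (G : SimpleGraph V) (v : V) :
    2 ≤ Nat.card (Quot (rootedOrbitRel G v)) := by
  obtain ⟨u, hu⟩ := exists_ne v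
  refine Finite.one_lt_card_iff_nontrivial.mpr ⟨⟨Quot.mk _ u, Quot.mk _ v, fun h => hu ?_⟩⟩
  obtain ⟨φ, hv, hu'⟩ := rootedOrbitRel_iff_mk_eq.mpr h
  exact φ.injective (hu'.trans hv.symm)

end RootedOrbits

section DeltaComp

variable {V₁ V₂ V₃ : Type} {G₁ : SimpleGraph V₁} {G₂ : SimpleGraph V₂} {G₃ : SimpleGraph V₃}
  {v₁ : V₁} {v₂ : V₂} {v₃ : V₃}

def partIndex : V₁ ⊕ V₂ ⊕ V₃ → Fin 3
  | .inl _ => 0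
  | .inr (.inl _) => 1
  | .inr (.inr _) => 2

def deltaTriangle (v₁ : V₁) (v₂ : V₂) (v₃ : V₃) : Set (V₁ ⊕ V₂ ⊕ V₃) :=
  {.inl v₁, .inr (.inl v₂), .inr (.inr v₃)}

local notation "D" => deltaComp G₁ G₂ G₃ v₁ v₂ v₃
local notation "T" => deltaTriangle v₁ v₂ v₃

lemma deltaComp_mem_deltaTriangle_of_adj {x y : V₁ ⊕ V₂ ⊕ V₃} (h : (D).Adj x y)
    (hxy : partIndex x ≠ partIndex y) : x ∈ T ∧ y ∈ T := by
  rcases x with a | a | a <;> rcases y with b | b | b <;>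
    simp_all [deltaComp, partIndex, deltaTriangle]

lemma eq_of_mem_deltaTriangle {x y : V₁ ⊕ V₂ ⊕ V₃} (hx : x ∈ T) (hy : y ∈ T)
    (h : partIndex x = partIndex y) : x = y := by
  simp only [deltaTriangle, Set.mem_insert_iff, Set.mem_singleton_iff] at hx hy
  rcases hx with rfl | rfl | rfl <;> rcases hy with rfl | rfl | rfl <;> simp_all [partIndex]

lemma deltaComp_isClique_deltaTriangle : (D).IsClique T := by
  simp [deltaTriangle, isClique_insert, deltaComp]

lemma deltaComp_reachable_of_partIndex_eq (hG₁ : G₁.Connected) (hG₂ : G₂.Connected)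
    (hG₃ : G₃.Connected) {S : Set (V₁ ⊕ V₂ ⊕ V₃)} {x y : V₁ ⊕ V₂ ⊕ V₃}
    (hS : (S ∩ {a | partIndex a = partIndex x}).Subsingleton)
    (h : partIndex x = partIndex y) : ((D).deleteEdges S.sym2).Reachable x y := by
  have hadj : ∀ {a b}, (D).Adj a b → partIndex a = partIndex x → partIndex b = partIndex x →
      ((D).deleteEdges S.sym2).Adj a b :=
    fun hab ha hb => deleteEdges_adj.mpr ⟨hab, fun ⟨haS, hbS⟩ => hab.ne (hS ⟨haS, ha⟩ ⟨hbS, hb⟩)⟩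
  rcases x with a | a | a <;> rcases y with b | b | b <;> simp only [partIndex] at h <;>
    first | exact absurd h (by decide) | skip
  · exact (hG₁.preconnected a b).map ⟨Sum.inl, fun h => hadj h rfl rfl⟩
  · exact (hG₂.preconnected a b).map ⟨Sum.inr ∘ Sum.inl, fun h => hadj h rfl rfl⟩
  · exact (hG₃.preconnected a b).map ⟨Sum.inr ∘ Sum.inr, fun h => hadj h rfl rfl⟩

lemma partIndex_eq_of_reachable {x y : V₁ ⊕ V₂ ⊕ V₃}
    (h : ((D).deleteEdges (T).sym2).Reachable x y) : partIndex x = partIndex y := by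
  obtain ⟨w⟩ := h
  induction w with
  | nil => rfl
  | cons hadj _ ih =>
    rw [← ih]
    by_contra hne
    obtain ⟨hadj, hT⟩ := deleteEdges_adj.mp hadj
    exact hT (deltaComp_mem_deltaTriangle_of_adj hadj hne)

lemma deltaComp_reachable_iff (hG₁ : G₁.Connected) (hG₂ : G₂.Connected) (hG₃ : G₃.Connected)
    {x y : V₁ ⊕ V₂ ⊕ V₃} :
    ((D).deleteEdges (T).sym2).Reachable x y ↔ partIndex x = partIndex y :=
  ⟨partIndex_eq_of_reachable, deltaComp_reachable_of_partIndex_eq hG₁ hG₂ hG₃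
    fun _ ⟨ha, ha'⟩ _ ⟨hb, hb'⟩ => eq_of_mem_deltaTriangle ha hb (ha'.trans hb'.symm)⟩

lemma deltaComp_connected (hG₁ : G₁.Connected) (hG₂ : G₂.Connected) (hG₃ : G₃.Connected) :
    (D).Connected := by
  refine (connected_iff_exists_forall_reachable _).mpr ⟨.inl v₁, fun x => ?_⟩
  obtain ⟨t, ht, htx⟩ : ∃ t ∈ T, partIndex t = partIndex x := by
    rcases x with _ | _ | _ <;> simp [deltaTriangle, partIndex]
  have hv₁t : (D).Reachable (.inl v₁) t := by
    rcases eq_or_ne (.inl v₁) t with rfl | hne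
    · rfl
    · exact (deltaComp_isClique_deltaTriangle (by simp [deltaTriangle]) ht hne).reachable
  exact hv₁t.trans (((deltaComp_reachable_iff hG₁ hG₂ hG₃).mpr htx).mono (deleteEdges_le _))

lemma ncard_partIndex_eq {n : ℕ} (hn₁ : Nat.card V₁ = n) (hn₂ : Nat.card V₂ = n)
    (hn₃ : Nat.card V₃ = n) (j : Fin 3) :
    {x : V₁ ⊕ V₂ ⊕ V₃ | partIndex x = j}.ncard = n := by
  have hrange {α : Type} {f : α → V₁ ⊕ V₂ ⊕ V₃} (hf : f.Injective) (hα : Nat.card α = n)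
      (hj : {x | partIndex x = j} = Set.range f) :
      {x : V₁ ⊕ V₂ ⊕ V₃ | partIndex x = j}.ncard = n := by
    rw [hj, Set.ncard_range_of_injective hf, hα]
  fin_cases j
  · exact hrange Sum.inl_injective hn₁ (by ext (_ | _ | _) <;> simp [partIndex])
  · exact hrange (Sum.inr_injective.comp Sum.inl_injective) hn₂
      (by ext (_ | _ | _) <;> simp [partIndex])
  · exact hrange (Sum.inr_injective.comp Sum.inr_injective) hn₃
      (by ext (_ | _ | _) <;> simp [partIndex])

lemma deltaComp_isBalancedCut [Finite V₁] [Finite V₂] [Finite V₃] {n : ℕ}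
    (hn₁ : Nat.card V₁ = n) (hn₂ : Nat.card V₂ = n) (hn₃ : Nat.card V₃ = n) :
    (D).IsBalancedCut T n := by
  intro x
  calc {y | ((D).deleteEdges (T).sym2).Reachable x y}.ncard
      ≤ {y | partIndex y = partIndex x}.ncard :=
        Set.ncard_le_ncard fun _ hy => (partIndex_eq_of_reachable hy).symm
    _ = n := ncard_partIndex_eq hn₁ hn₂ hn₃ _

structure DeltaFactors (G₁ : SimpleGraph V₁) (G₂ : SimpleGraph V₂) (G₃ : SimpleGraph V₃)
    (n : ℕ) : Prop where
  connected₁ : G₁.Connected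
  connected₂ : G₂.Connected
  connected₃ : G₃.Connected
  card₁ : Nat.card V₁ = n
  card₂ : Nat.card V₂ = n
  card₃ : Nat.card V₃ = n

lemma DeltaFactors.rotate {n : ℕ} (h : DeltaFactors G₁ G₂ G₃ n) : DeltaFactors G₂ G₃ G₁ n :=
  ⟨h.connected₂, h.connected₃, h.connected₁, h.card₂, h.card₃, h.card₁⟩

lemma deltaComp_lt_ncard_reachable [Finite V₁] [Finite V₂] [Finite V₃] {n : ℕ}
    (hG : DeltaFactors G₁ G₂ G₃ n) {S : Set (V₁ ⊕ V₂ ⊕ V₃)} {x z : V₁ ⊕ V₂ ⊕ V₃}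
    (hS : ∀ a ∈ S, partIndex a ≠ partIndex x)
    (hxz : (D).Adj x z) (hz : partIndex z ≠ partIndex x) :
    n < {y | ((D).deleteEdges S.sym2).Reachable x y}.ncard := by
  have hsub : insert z {y | partIndex y = partIndex x} ⊆
      {y | ((D).deleteEdges S.sym2).Reachable x y} := by
    rintro y (rfl | hy)
    · exact (deleteEdges_adj.mpr ⟨hxz, fun h => hS x h.1 rfl⟩).reachable
    · exact deltaComp_reachable_of_partIndex_eq hG.connected₁ hG.connected₂ hG.connected₃
        (fun a ⟨ha, h⟩ => absurd h (hS a ha)) (Eq.symm hy)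
  calc n < n + 1 := n.lt_succ_self
    _ = (insert z {y | partIndex y = partIndex x}).ncard := by
      rw [Set.ncard_insert_of_notMem (s := {y | partIndex y = partIndex x}) hz,
        ncard_partIndex_eq hG.card₁ hG.card₂ hG.card₃]
    _ ≤ _ := Set.ncard_le_ncard hsub

lemma deltaComp_not_isBalancedCut [Finite V₁] [Finite V₂] [Finite V₃] {n : ℕ}
    (hG : DeltaFactors G₁ G₂ G₃ n)
    {S : Set (V₁ ⊕ V₂ ⊕ V₃)} {j : Fin 3} (hS : ∀ a ∈ S, partIndex a = j) :
    ¬ (D).IsBalancedCut S n := by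
  -- an edge of the main triangle leaving a part that `S` misses survives the deletion
  obtain ⟨x, z, hxz, hx, hz⟩ :
      ∃ x z, (D).Adj x z ∧ partIndex x ≠ j ∧ partIndex z ≠ partIndex x := by
    by_cases hj : j = 0
    · exact ⟨.inr (.inl v₂), .inl v₁, ⟨rfl, rfl⟩, by simp [partIndex, hj], by simp [partIndex]⟩
    · exact ⟨.inl v₁, .inr (.inl v₂), ⟨rfl, rfl⟩, by simp [partIndex, Ne.symm hj],
        by simp [partIndex]⟩
  exact fun h => (h x).not_gt (deltaComp_lt_ncard_reachable hG
    (fun a ha => (hS a ha).trans_ne hx.symm) hxz hz)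

lemma deltaComp_subset_deltaTriangle [Finite V₁] [Finite V₂] [Finite V₃] {n : ℕ}
    (hG : DeltaFactors G₁ G₂ G₃ n)
    {S : Set (V₁ ⊕ V₂ ⊕ V₃)} (hS : (D).IsClique S) (hb : (D).IsBalancedCut S n) : S ⊆ T := by
  intro x hx
  by_contra hxT
  -- all neighbours of a vertex off the main triangle lie in its own part, hence so does `S`
  refine deltaComp_not_isBalancedCut hG (j := partIndex x) (fun y hy => ?_) hb
  by_contra hne
  have hxy : x ≠ y := fun h => hne (congrArg partIndex h.symm)
  exact hxT (deltaComp_mem_deltaTriangle_of_adj (hS hx hy hxy) (Ne.symm hne)).1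

lemma deltaComp_image_deltaTriangle [Finite V₁] [Finite V₂] [Finite V₃] {n : ℕ}
    (hG : DeltaFactors G₁ G₂ G₃ n) (φ : D ≃g D) : φ '' T = T :=
  Set.eq_of_subset_of_ncard_le
    (deltaComp_subset_deltaTriangle hG
      (deltaComp_isClique_deltaTriangle.image φ)
      ((deltaComp_isBalancedCut hG.card₁ hG.card₂ hG.card₃).image φ))
    (Set.ncard_image_of_injective _ φ.injective).ge

lemma deltaComp_partIndex_apply_eq [Finite V₁] [Finite V₂] [Finite V₃] {n : ℕ}
    (hG : DeltaFactors G₁ G₂ G₃ n)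
    (φ : D ≃g D) {x y : V₁ ⊕ V₂ ⊕ V₃} (h : partIndex x = partIndex y) :
    partIndex (φ x) = partIndex (φ y) := by
  have hr : ((D).deleteEdges (φ '' T).sym2).Reachable (φ x) (φ y) :=
    (Iso.reachable_iff (φ := φ.deleteEdgesSym2 T)).mpr
    ((deltaComp_reachable_iff hG.connected₁ hG.connected₂ hG.connected₃).mpr h)
  rw [deltaComp_image_deltaTriangle hG φ] at hr
  exact partIndex_eq_of_reachable hr

lemma deltaComp_exists_restrict [Finite V₁] [Finite V₂] [Finite V₃] {n : ℕ}
    (hG : DeltaFactors G₁ G₂ G₃ n)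
    {α : Type} {A : SimpleGraph α} {f : α → V₁ ⊕ V₂ ⊕ V₃} (hf : f.Injective)
    (hadj : ∀ a b, (D).Adj (f a) (f b) ↔ A.Adj a b) {j : Fin 3}
    (hrange : Set.range f = {z | partIndex z = j}) (φ : D ≃g D) {x y : α}
    (h : φ (f x) = f y) : ∃ ψ : A ≃g A, ∀ a, φ (f a) = f (ψ a) := by
  have hpart : ∀ a, partIndex (f a) = j := fun a => (hrange ▸ Set.mem_range_self a :)
  refine Iso.exists_restrict hf hadj φ (fun a => hrange ▸ ?_) (fun a => hrange ▸ ?_)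
  · show partIndex (φ (f a)) = j
    rw [deltaComp_partIndex_apply_eq hG φ ((hpart a).trans (hpart x).symm), h, hpart]
  · show partIndex (φ.symm (f a)) = j
    rw [deltaComp_partIndex_apply_eq hG φ.symm ((hpart a).trans (hpart y).symm), ← h,
      φ.symm_apply_apply, hpart]

lemma rootedOrbitRel_of_deltaComp_inl [Finite V₁] [Finite V₂] [Finite V₃] {n : ℕ}
    (hG : DeltaFactors G₁ G₂ G₃ n) {r x y : V₁}
    (h : rootedOrbitRel D (.inl r) (.inl x) (.inl y)) : rootedOrbitRel G₁ r x y := by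
  obtain ⟨φ, hr, hxy⟩ := h
  obtain ⟨ψ, hψ⟩ := deltaComp_exists_restrict hG Sum.inl_injective
    (fun _ _ => Iff.rfl) (j := 0) (by ext (_ | _ | _) <;> simp [partIndex]) φ hxy
  exact ⟨ψ, Sum.inl_injective ((hψ r).symm.trans hr), Sum.inl_injective ((hψ x).symm.trans hxy)⟩

lemma rootedOrbitRel_of_deltaComp_inr_inl [Finite V₁] [Finite V₂] [Finite V₃] {n : ℕ}
    (hG : DeltaFactors G₁ G₂ G₃ n)
    {w : V₁ ⊕ V₂ ⊕ V₃} {x y : V₂} (h : rootedOrbitRel D w (.inr (.inl x)) (.inr (.inl y))) :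
    rootedOrbitRel G₂ v₂ x y := by
  obtain ⟨φ, -, hxy⟩ := h
  have hinj : (fun a : V₂ => (.inr (.inl a) : V₁ ⊕ V₂ ⊕ V₃)).Injective :=
    Sum.inr_injective.comp Sum.inl_injective
  obtain ⟨ψ, hψ⟩ := deltaComp_exists_restrict hG hinj
    (fun _ _ => Iff.rfl) (j := 1) (by ext (_ | _ | _) <;> simp [partIndex]) φ hxy
  have ht₂ : (.inr (.inl v₂) : V₁ ⊕ V₂ ⊕ V₃) ∈ T := by simp [deltaTriangle]
  have hφt₂ : φ (.inr (.inl v₂)) = .inr (.inl v₂) := by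
    refine eq_of_mem_deltaTriangle ?_ ht₂ (by rw [hψ]; rfl)
    rw [← deltaComp_image_deltaTriangle hG φ]
    exact Set.mem_image_of_mem φ ht₂
  exact ⟨ψ, hinj ((hψ v₂).symm.trans hφt₂), hinj ((hψ x).symm.trans hxy)⟩

lemma not_rootedOrbitRel_deltaComp_inl_inr [Finite V₁] [Finite V₂] [Finite V₃] {n : ℕ}
    (hG : DeltaFactors G₁ G₂ G₃ n) {r x : V₁} {y : V₂} :
    ¬ rootedOrbitRel D (.inl r) (.inl x) (.inr (.inl y)) := by
  rintro ⟨φ, hr, hxy⟩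
  have h := deltaComp_partIndex_apply_eq hG φ
    (x := .inl x) (y := .inl r) rfl
  rw [hxy, hr] at h
  exact absurd h (by simp [partIndex])

lemma two_mul_le_card_rootedOrbits_deltaComp_inl [Finite V₁] [Finite V₂] [Finite V₃] {n m : ℕ}
    (hG : DeltaFactors G₁ G₂ G₃ n) {r : V₁}
    (hm₁ : m ≤ Nat.card (Quot (rootedOrbitRel G₁ r)))
    (hm₂ : m ≤ Nat.card (Quot (rootedOrbitRel G₂ v₂))) :
    2 * m ≤ Nat.card (Quot (rootedOrbitRel D (.inl r))) := by
  have hinj : Function.Injective (Sum.elim (fun q : Quot (rootedOrbitRel G₁ r) =>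
      Quot.mk (rootedOrbitRel D (.inl r)) (.inl q.out))
      (fun q : Quot (rootedOrbitRel G₂ v₂) => Quot.mk _ (.inr (.inl q.out)))) := by
    refine Function.Injective.sumElim (fun q q' h => ?_) (fun q q' h => ?_) (fun q q' h => ?_)
    · rw [← q.out_eq, ← q'.out_eq, ← rootedOrbitRel_iff_mk_eq]
      exact rootedOrbitRel_of_deltaComp_inl hG
        (rootedOrbitRel_iff_mk_eq.mpr h)
    · rw [← q.out_eq, ← q'.out_eq, ← rootedOrbitRel_iff_mk_eq]
      exact rootedOrbitRel_of_deltaComp_inr_inl hG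
        (rootedOrbitRel_iff_mk_eq.mpr h)
    · exact not_rootedOrbitRel_deltaComp_inl_inr hG
        (rootedOrbitRel_iff_mk_eq.mpr h)
  calc 2 * m
      ≤ Nat.card (Quot (rootedOrbitRel G₁ r)) + Nat.card (Quot (rootedOrbitRel G₂ v₂)) := by omega
    _ ≤ Nat.card (Quot (rootedOrbitRel D (.inl r))) := by
        rw [← Nat.card_sum]
        exact Nat.card_le_card_of_injective _ hinj

def deltaCompRotate : D ≃g deltaComp G₂ G₃ G₁ v₂ v₃ v₁ where
  toEquiv := (Equiv.sumComm _ _).trans (Equiv.sumAssoc _ _ _)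
  map_rel_iff' := by rintro (_ | _ | _) (_ | _ | _) <;> exact Iff.rfl

lemma two_mul_le_card_rootedOrbits_deltaComp [Finite V₁] [Finite V₂] [Finite V₃] {n m : ℕ}
    (hG : DeltaFactors G₁ G₂ G₃ n)
    (hm₁ : ∀ w, m ≤ Nat.card (Quot (rootedOrbitRel G₁ w)))
    (hm₂ : ∀ w, m ≤ Nat.card (Quot (rootedOrbitRel G₂ w)))
    (hm₃ : ∀ w, m ≤ Nat.card (Quot (rootedOrbitRel G₃ w))) (x : V₁ ⊕ V₂ ⊕ V₃) :
    2 * m ≤ Nat.card (Quot (rootedOrbitRel D x)) := by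
  rcases x with r | r | r
  · exact two_mul_le_card_rootedOrbits_deltaComp_inl hG (hm₁ r) (hm₂ v₂)
  · rw [Nat.card_congr (deltaCompRotate.rootedOrbitsEquiv _)]
    exact two_mul_le_card_rootedOrbits_deltaComp_inl hG.rotate (hm₂ r) (hm₃ v₃)
  · rw [Nat.card_congr (Iso.rootedOrbitsEquiv (deltaCompRotate.trans deltaCompRotate) _)]
    exact two_mul_le_card_rootedOrbits_deltaComp_inl hG.rotate.rotate (hm₃ r) (hm₁ v₁)

end DeltaComp

section InDelta

variable {k : ℕ} {V : Type} {G : SimpleGraph V}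

lemma InDelta.finite (h : InDelta k G) : Finite V := by
  induction h with
  | base G e => exact Finite.of_equiv _ e.some.toEquiv.symm
  | comp G _ _ _ _ _ _ e ih₁ ih₂ ih₃ => exact Finite.of_equiv _ e.some.toEquiv.symm

lemma InDelta.card (h : InDelta k G) : Nat.card V = 2 * 3 ^ k := by
  induction h with
  | base G e => simp [Nat.card_congr e.some.toEquiv]
  | comp G _ _ _ h₁ h₂ h₃ e ih₁ ih₂ ih₃ =>
    have := h₁.finite; have := h₂.finite; have := h₃.finite
    rw [Nat.card_congr e.some.toEquiv, Nat.card_sum, Nat.card_sum, ih₁, ih₂, ih₃]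
    ring

lemma InDelta.connected (h : InDelta k G) : G.Connected := by
  induction h with
  | base G e => exact e.some.connected_iff.mpr connected_top
  | comp G _ _ _ _ _ _ e ih₁ ih₂ ih₃ =>
    exact e.some.connected_iff.mpr (deltaComp_connected ih₁ ih₂ ih₃)

end InDelta

theorem delta_rooted_orbits {V : Type} (k : ℕ) (G : SimpleGraph V)
    (hG : InDelta k G) (v : V) :
    2 ^ (k + 1) ≤ Nat.card (Quot (rootedOrbitRel G v)) := by
  induction hG with
  | base G e =>
    have : Finite _ := Finite.of_equiv _ e.some.toEquiv.symm
    have : Nontrivial _ := e.some.toEquiv.nontrivial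
    exact two_le_card_rootedOrbits G v
  | comp G v₁ v₂ v₃ h₁ h₂ h₃ e ih₁ ih₂ ih₃ =>
    have := h₁.finite; have := h₂.finite; have := h₃.finite
    rw [Nat.card_congr (e.some.rootedOrbitsEquiv v), pow_succ, mul_comm]
    exact two_mul_le_card_rootedOrbits_deltaComp
      ⟨h₁.connected, h₂.connected, h₃.connected, h₁.card, h₂.card, h₃.card⟩ ih₁ ih₂ ih₃ _
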